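/- arXiv:2004.14363 — 3 statements merged into one kernel-verified Lean document; each statement's English description precedes it below -/
import Mathlib

section
/- Let g be a real symmetric invertible 3×3 matrix. Then there is exactly one family of real numbers Γ_{ijk} (i,j,k ∈ {1,2,3}) satisfying both the torsion-freeness condition Γ_{ijk} − Γ_{ikj} = 2 g_{im} ε_{mjk} for all i,j,k and the metric-compatibility condition Γ_{lik} + Γ_{kil} = 0 for all l,i,k; namely Γ_{ijk} = 2 ε_{ikm} g_{mj} + Tr(g) ε_{ijk}. -/
open scoped BigOperators

/-- The Levi-Civita symbol on `{1,2,3}` (totally antisymmetric, `ε₁₂₃ = 1`). -/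
noncomputable def eps (i j k : Fin 3) : ℝ :=
  (((j : ℕ) : ℝ) - ((i : ℕ) : ℝ)) * (((k : ℕ) : ℝ) - ((j : ℕ) : ℝ)) *
    (((k : ℕ) : ℝ) - ((i : ℕ) : ℝ)) / 2

set_option maxHeartbeats 1000000 in
/-- For a real symmetric invertible 3×3 matrix `g`, a family `Γ_{ijk}` of real numbers
satisfies both the torsion-freeness condition `Γ_{ijk} − Γ_{ikj} = 2 g_{im} ε_{mjk}` and the
metric-compatibility condition `Γ_{lik} + Γ_{kil} = 0` if and only if
`Γ_{ijk} = 2 ε_{ikm} g_{mj} + Tr(g) ε_{ijk}`; in particular such a family exists and is unique. -/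
theorem unique_QLC (g : Matrix (Fin 3) (Fin 3) ℝ) (hsym : g.IsSymm) (hinv : IsUnit g) :
    ∀ Γ : Fin 3 → Fin 3 → Fin 3 → ℝ,
      ((∀ i j k, Γ i j k - Γ i k j = 2 * ∑ m, g i m * eps m j k) ∧
        (∀ l i k, Γ l i k + Γ k i l = 0)) ↔
      Γ = fun i j k => 2 * ∑ m, eps i k m * g m j + g.trace * eps i j k := by
  have hs : ∀ i j, g i j = g j i := fun i j => (hsym.apply i j).symm
  intro Γ
  constructor
  · rintro ⟨h1, h2⟩
    funext i j k
    have e1 := h1 i j k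
    have e2 := h1 j k i
    have e3 := h1 k i j
    have a1 := h2 i k j
    have a2 := h2 j i k
    have a3 := h2 k j i
    have key : Γ i j k =
        ((2 * ∑ m, g i m * eps m j k) - (2 * ∑ m, g j m * eps m k i)
          + (2 * ∑ m, g k m * eps m i j)) / 2 := by linarith
    rw [key]
    fin_cases i <;> fin_cases j <;> fin_cases k <;>
      simp [eps, Fin.sum_univ_three, Matrix.trace_fin_three, Fin.isValue] <;>
      (try rw [hs 1 0]) <;> (try rw [hs 2 0]) <;> (try rw [hs 2 1]) <;> ring
  · rintro rfl
    constructor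
    · intro i j k
      fin_cases i <;> fin_cases j <;> fin_cases k <;>
        simp [eps, Fin.sum_univ_three, Matrix.trace_fin_three, Fin.isValue] <;>
        (try rw [hs 1 0]) <;> (try rw [hs 2 0]) <;> (try rw [hs 2 1]) <;> ring
    · intro l i k
      fin_cases l <;> fin_cases i <;> fin_cases k <;>
        simp [eps, Fin.sum_univ_three, Matrix.trace_fin_three, Fin.isValue] <;>
        (try rw [hs 1 0]) <;> (try rw [hs 2 0]) <;> (try rw [hs 2 1]) <;> ring
end

section
/- Let g be a real symmetric 3×3 matrix and for each i ∈ {1,2,3} let L_i be the 3×3 matrix with entries (L_i)_{mn} = ε_{imn}. Then γ = 2g − Tr(g)·I₃ is the unique real 3×3 matrix satisfying L_i γ − (L_i γ)ᵀ + 2 g_{im} L_m = 0 for all i ∈ {1,2,3}. -/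
open scoped BigOperators
open Matrix

/-- The matrix `L_i` with entries `(L_i)_{mn} = ε_{imn}`. -/
noncomputable def Lmat (i : Fin 3) : Matrix (Fin 3) (Fin 3) ℝ :=
  Matrix.of fun m n => eps i m n

/-!
Each matrix `L_i γ − (L_i γ)ᵀ + 2 g_{im} L_m` is antisymmetric, so it vanishes iff its axial
vector `ε_{cab} (·)_{ab}` does. By `ε_{cab} ε_{mab} = 2 δ_{cm}` and
`ε_{abc} ε_{aki} = δ_{bk} δ_{ci} − δ_{bi} δ_{ck}` that axial vector is
`2 (δ_{ci} Tr γ − γ_{ci}) + 4 g_{ic}`, so the equations say exactly `γ = Tr γ · I₃ + 2 gᵀ`.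
Taking traces gives `Tr γ = −Tr g`, and `gᵀ = g`.
-/

theorem eps_swap_right (i j k : Fin 3) : eps i k j = -eps i j k := by
  unfold eps
  ring

theorem transpose_Lmat (i : Fin 3) : (Lmat i)ᵀ = -Lmat i := by
  ext m n
  exact eps_swap_right i m n

noncomputable def axial : Matrix (Fin 3) (Fin 3) ℝ →ₗ[ℝ] Fin 3 → ℝ where
  toFun A c := ∑ a, ∑ b, eps c a b * A a b
  map_add' A B := by
    ext c
    simp only [Matrix.add_apply, mul_add, Finset.sum_add_distrib, Pi.add_apply]
  map_smul' r A := by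
    ext c
    simp [Finset.mul_sum, mul_left_comm]

theorem axial_apply (A : Matrix (Fin 3) (Fin 3) ℝ) (c : Fin 3) :
    axial A c = ∑ a, ∑ b, eps c a b * A a b := rfl

theorem axial_eq_zero_iff {A : Matrix (Fin 3) (Fin 3) ℝ} (hA : Aᵀ = -A) :
    axial A = 0 ↔ A = 0 := by
  refine ⟨fun h => ?_, fun h => h ▸ map_zero axial⟩
  have hA' a b : A b a = -A a b := congrFun (congrFun hA a) b
  have h0 := congrFun h 0
  have h1 := congrFun h 1
  have h2 := congrFun h 2
  norm_num [axial_apply, Fin.sum_univ_three, eps] at h0 h1 h2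
  ext a b
  fin_cases a <;> fin_cases b <;> simp <;>
    linarith [hA' 0 0, hA' 1 1, hA' 2 2, hA' 0 1, hA' 0 2, hA' 1 2]

theorem axial_Lmat (m c : Fin 3) : axial (Lmat m) c = if c = m then 2 else 0 := by
  fin_cases c <;> fin_cases m <;> norm_num [axial_apply, Lmat, eps, Fin.sum_univ_three]

theorem axial_Lmat_mul_sub_transpose (i : Fin 3) (γ : Matrix (Fin 3) (Fin 3) ℝ) (c : Fin 3) :
    axial (Lmat i * γ - (Lmat i * γ)ᵀ) c = 2 * ((if c = i then γ.trace else 0) - γ c i) := by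
  fin_cases c <;> fin_cases i <;>
    simp [axial_apply, Lmat, mul_apply, trace, Fin.sum_univ_three, eps] <;> ring

noncomputable def gammaResidual (g γ : Matrix (Fin 3) (Fin 3) ℝ) (i : Fin 3) :
    Matrix (Fin 3) (Fin 3) ℝ :=
  Lmat i * γ - (Lmat i * γ)ᵀ + ∑ m, (2 * g i m) • Lmat m

section

variable (g γ : Matrix (Fin 3) (Fin 3) ℝ) (i : Fin 3)

theorem transpose_gammaResidual : (gammaResidual g γ i)ᵀ = -gammaResidual g γ i := by
  simp only [gammaResidual, transpose_add, transpose_sub, transpose_transpose, transpose_sum,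
    transpose_smul, transpose_Lmat, smul_neg, Finset.sum_neg_distrib]
  abel

theorem axial_gammaResidual (c : Fin 3) :
    axial (gammaResidual g γ i) c =
      2 * ((if c = i then γ.trace else 0) - γ c i) + 4 * g i c := by
  simp only [gammaResidual, map_add, Pi.add_apply, axial_Lmat_mul_sub_transpose, map_sum,
    Finset.sum_apply, map_smul, Pi.smul_apply, axial_Lmat, smul_eq_mul, mul_ite, mul_zero,
    Finset.sum_ite_eq, Finset.mem_univ, if_true]
  ring

theorem gammaResidual_eq_zero_iff :
    (∀ i, gammaResidual g γ i = 0) ↔ γ = γ.trace • 1 + 2 • gᵀ := by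
  simp only [← axial_eq_zero_iff (transpose_gammaResidual g γ _), funext_iff,
    axial_gammaResidual, Pi.zero_apply]
  rw [← Matrix.ext_iff, forall_comm]
  refine forall₂_congr fun c i => ?_
  simp only [Matrix.add_apply, Matrix.smul_apply, one_apply, transpose_apply, smul_eq_mul,
    two_nsmul, mul_ite, mul_one, mul_zero]
  constructor <;> intro h <;> linarith

end

theorem eq_trace_smul_one_add_iff (γ h : Matrix (Fin 3) (Fin 3) ℝ) :
    γ = γ.trace • 1 + 2 • h ↔ γ = 2 • h - h.trace • 1 := by
  constructor
  · intro hγ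
    have htr : γ.trace = -h.trace := by
      have := congrArg trace hγ
      simp only [trace_add, trace_smul, trace_one, smul_eq_mul, two_nsmul,
        Fintype.card_fin] at this
      push_cast at this
      linarith
    rw [hγ, htr]
    module
  · rintro rfl
    rw [trace_sub, trace_smul, trace_smul, trace_one, Fintype.card_fin]
    module

/-- For a real symmetric 3×3 matrix `g`, the matrix `γ = 2g − Tr(g)·I₃` is the unique real
3×3 matrix satisfying `L_i γ − (L_i γ)ᵀ + 2 g_{im} L_m = 0` for all `i`. -/
theorem unique_gamma (g : Matrix (Fin 3) (Fin 3) ℝ) (hsym : g.IsSymm) :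
    ∀ γ : Matrix (Fin 3) (Fin 3) ℝ,
      (∀ i, Lmat i * γ - (Lmat i * γ)ᵀ + ∑ m, (2 * g i m) • Lmat m = 0) ↔
        γ = 2 • g - g.trace • (1 : Matrix (Fin 3) (Fin 3) ℝ) := by
  intro γ
  have h := gammaResidual_eq_zero_iff g γ
  rw [hsym.eq, eq_trace_smul_one_add_iff] at h
  exact h
end

section
/- Let g be a real symmetric invertible 3×3 matrix with inverse h. Then the Ricci tensor of the quantum Levi-Civita connection satisfies, for all s,t: R_{st} = (1/2)ε^i_{tm} g_{mj} ε_{jis} + (1/2)Tr(h) g_{st} − (1/2)δ_{st} + (1/2)Tr(g)(h_{st} − Tr(h)δ_{st} − (1/2)ε^{ij}_p ε_{ijs} g_{pt}) + (1/8)Tr(g)² ε^{ij}_t ε_{ijs}. -/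
open scoped BigOperators

/-- The Christoffel symbols `Γ_{ijk} = 2 ε_{ikm} g_{mj} + Tr(g) ε_{ijk}` of the quantum
Levi-Civita connection. -/
noncomputable def Gam (g : Matrix (Fin 3) (Fin 3) ℝ) (i j k : Fin 3) : ℝ :=
  2 * ∑ m, eps i k m * g m j + g.trace * eps i j k

/-- The raised-index Christoffel symbols `Γ^i_{jk} = h_{im} Γ_{mjk}`, `h = g⁻¹`. -/
noncomputable def GamU (g : Matrix (Fin 3) (Fin 3) ℝ) (i j k : Fin 3) : ℝ :=
  ∑ m, g⁻¹ i m * Gam g m j k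

/-- The curvature coefficients `ρ^i_{jk} = (1/4)Γ^i_{jk} − (1/8) ε_{jmn} Γ^i_{ml} Γ^l_{nk}`. -/
noncomputable def rho (g : Matrix (Fin 3) (Fin 3) ℝ) (i j k : Fin 3) : ℝ :=
  (1 / 4) * GamU g i j k -
    (1 / 8) * ∑ m, ∑ n, ∑ l, eps j m n * GamU g i m l * GamU g l n k

/-- The Ricci tensor `R_{mn} = ρ^i_{jn} ε_{jim}`. -/
noncomputable def RicciT (g : Matrix (Fin 3) (Fin 3) ℝ) (m n : Fin 3) : ℝ :=
  ∑ i, ∑ j, rho g i j n * eps j i m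

/-- The once-raised Levi-Civita symbol `ε^i_{jk} = h_{ia} ε_{ajk}`, `h = g⁻¹`. -/
noncomputable def epsU1 (g : Matrix (Fin 3) (Fin 3) ℝ) (i j k : Fin 3) : ℝ :=
  ∑ a, g⁻¹ i a * eps a j k

/-- The twice-raised Levi-Civita symbol `ε^{ij}_k = h_{ia} h_{jb} ε_{abk}`, `h = g⁻¹`. -/
noncomputable def epsU2 (g : Matrix (Fin 3) (Fin 3) ℝ) (i j k : Fin 3) : ℝ :=
  ∑ a, ∑ b, g⁻¹ i a * g⁻¹ j b * eps a b k

lemma eps000 : eps 0 0 0 = 0 := by norm_num [eps]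
lemma eps001 : eps 0 0 1 = 0 := by norm_num [eps]
lemma eps002 : eps 0 0 2 = 0 := by norm_num [eps]
lemma eps010 : eps 0 1 0 = 0 := by norm_num [eps]
lemma eps011 : eps 0 1 1 = 0 := by norm_num [eps]
lemma eps012 : eps 0 1 2 = 1 := by norm_num [eps]
lemma eps020 : eps 0 2 0 = 0 := by norm_num [eps]
lemma eps021 : eps 0 2 1 = -1 := by norm_num [eps]
lemma eps022 : eps 0 2 2 = 0 := by norm_num [eps]
lemma eps100 : eps 1 0 0 = 0 := by norm_num [eps]
lemma eps101 : eps 1 0 1 = 0 := by norm_num [eps]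
lemma eps102 : eps 1 0 2 = -1 := by norm_num [eps]
lemma eps110 : eps 1 1 0 = 0 := by norm_num [eps]
lemma eps111 : eps 1 1 1 = 0 := by norm_num [eps]
lemma eps112 : eps 1 1 2 = 0 := by norm_num [eps]
lemma eps120 : eps 1 2 0 = 1 := by norm_num [eps]
lemma eps121 : eps 1 2 1 = 0 := by norm_num [eps]
lemma eps122 : eps 1 2 2 = 0 := by norm_num [eps]
lemma eps200 : eps 2 0 0 = 0 := by norm_num [eps]
lemma eps201 : eps 2 0 1 = 1 := by norm_num [eps]
lemma eps202 : eps 2 0 2 = 0 := by norm_num [eps]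
lemma eps210 : eps 2 1 0 = -1 := by norm_num [eps]
lemma eps211 : eps 2 1 1 = 0 := by norm_num [eps]
lemma eps212 : eps 2 1 2 = 0 := by norm_num [eps]
lemma eps220 : eps 2 2 0 = 0 := by norm_num [eps]
lemma eps221 : eps 2 2 1 = 0 := by norm_num [eps]
lemma eps222 : eps 2 2 2 = 0 := by norm_num [eps]

set_option maxHeartbeats 4000000 in
set_option maxRecDepth 8000 in
/-- Explicit formula for the Ricci tensor of the quantum Levi-Civita connection:
`R_{st} = (1/2)ε^i_{tm} g_{mj} ε_{jis} + (1/2)Tr(h) g_{st} − (1/2)δ_{st}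
 + (1/2)Tr(g)(h_{st} − Tr(h)δ_{st} − (1/2)ε^{ij}_p ε_{ijs} g_{pt})
 + (1/8)Tr(g)² ε^{ij}_t ε_{ijs}`. -/
theorem ricci_tensor_formula (g : Matrix (Fin 3) (Fin 3) ℝ) (hsym : g.IsSymm)
    (hinv : IsUnit g) :
    ∀ s t, RicciT g s t =
      (1 / 2) * (∑ i, ∑ m, ∑ j, epsU1 g i t m * g m j * eps j i s) +
        (1 / 2) * (g⁻¹).trace * g s t -
        (1 / 2) * (if s = t then (1 : ℝ) else 0) +
        (1 / 2) * g.trace *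
          (g⁻¹ s t - (g⁻¹).trace * (if s = t then (1 : ℝ) else 0) -
            (1 / 2) * ∑ i, ∑ j, ∑ p, epsU2 g i j p * eps i j s * g p t) +
        (1 / 8) * g.trace ^ 2 * ∑ i, ∑ j, epsU2 g i j t * eps i j s := by
  have hd : g.det ≠ 0 := by
    have := (Matrix.isUnit_iff_isUnit_det g).mp hinv
    simpa [isUnit_iff_ne_zero] using this
  have h10 : g 1 0 = g 0 1 := by rw [← hsym.apply]
  have h20 : g 2 0 = g 0 2 := by rw [← hsym.apply]
  have h21 : g 2 1 = g 1 2 := by rw [← hsym.apply]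
  set I : ℝ := (g.det)⁻¹ with hIdef
  have hI : g.det * I = 1 := mul_inv_cancel₀ hd
  have hinvd : ∀ i j, g⁻¹ i j = g.adjugate i j * I := by
    intro i j
    rw [Matrix.inv_def]
    simp [Ring.inverse_eq_inv', hIdef, Matrix.smul_apply, smul_eq_mul, mul_comm]
  rw [Matrix.det_fin_three, h10, h20, h21] at hI
  intro s t
  fin_cases s <;> fin_cases t
  · simp only [RicciT, rho, GamU, Gam, epsU1, epsU2, Matrix.trace, Matrix.diag,
      Fin.sum_univ_three, Fin.zero_eta, Fin.mk_one, Fin.reduceFinMk, eps000, eps001, eps002, eps010, eps011, eps012, eps020, eps021, eps022, eps100, eps101, eps102, eps110, eps111, eps112, eps120, eps121, eps122, eps200, eps201, eps202, eps210, eps211, eps212, eps220, eps221, eps222,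
      mul_zero, zero_mul, mul_one, one_mul, mul_neg_one, neg_mul, mul_neg, add_zero, zero_add,
      zero_sub, sub_zero, neg_neg, reduceIte, Fin.reduceEq, if_true, if_false, hinvd, Matrix.adjugate_fin_three,
      Matrix.of_apply, Matrix.cons_val', Matrix.cons_val_zero, Matrix.cons_val_one,
      Matrix.head_cons, Matrix.empty_val', Matrix.cons_val_fin_one, Matrix.head_fin_const,
      Matrix.cons_val_two, Matrix.tail_cons, h10, h20, h21]
    linear_combination (-(1/2:ℝ) + (1/4:ℝ)*g 0 2^2*g 2 2*I + (3/4:ℝ)*g 0 2^2*g 1 1*I - g 0 1*g 0 2*g 1 2*I + (3/4:ℝ)*g 0 1^2*g 2 2*I + (1/4:ℝ)*g 0 1^2*g 1 1*I - (1/4:ℝ)*g 0 0*g 2 2^2*I - (1/2:ℝ)*g 0 0*g 1 1*g 2 2*I - (1/4:ℝ)*g 0 0*g 1 1^2*I - (1/4:ℝ)*g 0 0*g 0 2^2*I - (1/4:ℝ)*g 0 0*g 0 1^2*I + (1/4:ℝ)*g 0 0^2*g 2 2*I + (1/4:ℝ)*g 0 0^2*g 1 1*I) * hI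
  · simp only [RicciT, rho, GamU, Gam, epsU1, epsU2, Matrix.trace, Matrix.diag,
      Fin.sum_univ_three, Fin.zero_eta, Fin.mk_one, Fin.reduceFinMk, eps000, eps001, eps002, eps010, eps011, eps012, eps020, eps021, eps022, eps100, eps101, eps102, eps110, eps111, eps112, eps120, eps121, eps122, eps200, eps201, eps202, eps210, eps211, eps212, eps220, eps221, eps222,
      mul_zero, zero_mul, mul_one, one_mul, mul_neg_one, neg_mul, mul_neg, add_zero, zero_add,
      zero_sub, sub_zero, neg_neg, reduceIte, Fin.reduceEq, if_true, if_false, hinvd, Matrix.adjugate_fin_three,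
      Matrix.of_apply, Matrix.cons_val', Matrix.cons_val_zero, Matrix.cons_val_one,
      Matrix.head_cons, Matrix.empty_val', Matrix.cons_val_fin_one, Matrix.head_fin_const,
      Matrix.cons_val_two, Matrix.tail_cons, h10, h20, h21]
    linear_combination ((1/4:ℝ)*g 0 2*g 1 2*g 2 2*I + (1/4:ℝ)*g 0 2*g 1 1*g 1 2*I - (1/4:ℝ)*g 0 1*g 2 2^2*I - (1/2:ℝ)*g 0 1*g 1 2^2*I + (1/4:ℝ)*g 0 1*g 1 1*g 2 2*I - (1/2:ℝ)*g 0 1*g 0 2^2*I - (1/2:ℝ)*g 0 1^3*I + (1/4:ℝ)*g 0 0*g 0 2*g 1 2*I + (1/4:ℝ)*g 0 0*g 0 1*g 2 2*I + (1/2:ℝ)*g 0 0*g 0 1*g 1 1*I) * hI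
  · simp only [RicciT, rho, GamU, Gam, epsU1, epsU2, Matrix.trace, Matrix.diag,
      Fin.sum_univ_three, Fin.zero_eta, Fin.mk_one, Fin.reduceFinMk, eps000, eps001, eps002, eps010, eps011, eps012, eps020, eps021, eps022, eps100, eps101, eps102, eps110, eps111, eps112, eps120, eps121, eps122, eps200, eps201, eps202, eps210, eps211, eps212, eps220, eps221, eps222,
      mul_zero, zero_mul, mul_one, one_mul, mul_neg_one, neg_mul, mul_neg, add_zero, zero_add,
      zero_sub, sub_zero, neg_neg, reduceIte, Fin.reduceEq, if_true, if_false, hinvd, Matrix.adjugate_fin_three,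
      Matrix.of_apply, Matrix.cons_val', Matrix.cons_val_zero, Matrix.cons_val_one,
      Matrix.head_cons, Matrix.empty_val', Matrix.cons_val_fin_one, Matrix.head_fin_const,
      Matrix.cons_val_two, Matrix.tail_cons, h10, h20, h21]
    linear_combination (-(1/2:ℝ)*g 0 2*g 1 2^2*I + (1/4:ℝ)*g 0 2*g 1 1*g 2 2*I - (1/4:ℝ)*g 0 2*g 1 1^2*I - (1/2:ℝ)*g 0 2^3*I + (1/4:ℝ)*g 0 1*g 1 2*g 2 2*I + (1/4:ℝ)*g 0 1*g 1 1*g 1 2*I - (1/2:ℝ)*g 0 1^2*g 0 2*I + (1/2:ℝ)*g 0 0*g 0 2*g 2 2*I + (1/4:ℝ)*g 0 0*g 0 2*g 1 1*I + (1/4:ℝ)*g 0 0*g 0 1*g 1 2*I) * hI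
  · simp only [RicciT, rho, GamU, Gam, epsU1, epsU2, Matrix.trace, Matrix.diag,
      Fin.sum_univ_three, Fin.zero_eta, Fin.mk_one, Fin.reduceFinMk, eps000, eps001, eps002, eps010, eps011, eps012, eps020, eps021, eps022, eps100, eps101, eps102, eps110, eps111, eps112, eps120, eps121, eps122, eps200, eps201, eps202, eps210, eps211, eps212, eps220, eps221, eps222,
      mul_zero, zero_mul, mul_one, one_mul, mul_neg_one, neg_mul, mul_neg, add_zero, zero_add,
      zero_sub, sub_zero, neg_neg, reduceIte, Fin.reduceEq, if_true, if_false, hinvd, Matrix.adjugate_fin_three,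
      Matrix.of_apply, Matrix.cons_val', Matrix.cons_val_zero, Matrix.cons_val_one,
      Matrix.head_cons, Matrix.empty_val', Matrix.cons_val_fin_one, Matrix.head_fin_const,
      Matrix.cons_val_two, Matrix.tail_cons, h10, h20, h21]
    linear_combination ((1/4:ℝ)*g 0 2*g 1 2*g 2 2*I + (1/4:ℝ)*g 0 2*g 1 1*g 1 2*I - (1/4:ℝ)*g 0 1*g 2 2^2*I - (1/2:ℝ)*g 0 1*g 1 2^2*I + (1/4:ℝ)*g 0 1*g 1 1*g 2 2*I - (1/2:ℝ)*g 0 1*g 0 2^2*I - (1/2:ℝ)*g 0 1^3*I + (1/4:ℝ)*g 0 0*g 0 2*g 1 2*I + (1/4:ℝ)*g 0 0*g 0 1*g 2 2*I + (1/2:ℝ)*g 0 0*g 0 1*g 1 1*I) * hI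
  · simp only [RicciT, rho, GamU, Gam, epsU1, epsU2, Matrix.trace, Matrix.diag,
      Fin.sum_univ_three, Fin.zero_eta, Fin.mk_one, Fin.reduceFinMk, eps000, eps001, eps002, eps010, eps011, eps012, eps020, eps021, eps022, eps100, eps101, eps102, eps110, eps111, eps112, eps120, eps121, eps122, eps200, eps201, eps202, eps210, eps211, eps212, eps220, eps221, eps222,
      mul_zero, zero_mul, mul_one, one_mul, mul_neg_one, neg_mul, mul_neg, add_zero, zero_add,
      zero_sub, sub_zero, neg_neg, reduceIte, Fin.reduceEq, if_true, if_false, hinvd, Matrix.adjugate_fin_three,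
      Matrix.of_apply, Matrix.cons_val', Matrix.cons_val_zero, Matrix.cons_val_one,
      Matrix.head_cons, Matrix.empty_val', Matrix.cons_val_fin_one, Matrix.head_fin_const,
      Matrix.cons_val_two, Matrix.tail_cons, h10, h20, h21]
    linear_combination (-(1/2:ℝ) + (1/4:ℝ)*g 1 2^2*g 2 2*I - (1/4:ℝ)*g 1 1*g 2 2^2*I - (1/4:ℝ)*g 1 1*g 1 2^2*I + (1/4:ℝ)*g 1 1^2*g 2 2*I - g 0 1*g 0 2*g 1 2*I + (3/4:ℝ)*g 0 1^2*g 2 2*I - (1/4:ℝ)*g 0 1^2*g 1 1*I + (3/4:ℝ)*g 0 0*g 1 2^2*I - (1/2:ℝ)*g 0 0*g 1 1*g 2 2*I + (1/4:ℝ)*g 0 0*g 1 1^2*I + (1/4:ℝ)*g 0 0*g 0 1^2*I - (1/4:ℝ)*g 0 0^2*g 1 1*I) * hI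
  · simp only [RicciT, rho, GamU, Gam, epsU1, epsU2, Matrix.trace, Matrix.diag,
      Fin.sum_univ_three, Fin.zero_eta, Fin.mk_one, Fin.reduceFinMk, eps000, eps001, eps002, eps010, eps011, eps012, eps020, eps021, eps022, eps100, eps101, eps102, eps110, eps111, eps112, eps120, eps121, eps122, eps200, eps201, eps202, eps210, eps211, eps212, eps220, eps221, eps222,
      mul_zero, zero_mul, mul_one, one_mul, mul_neg_one, neg_mul, mul_neg, add_zero, zero_add,
      zero_sub, sub_zero, neg_neg, reduceIte, Fin.reduceEq, if_true, if_false, hinvd, Matrix.adjugate_fin_three,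
      Matrix.of_apply, Matrix.cons_val', Matrix.cons_val_zero, Matrix.cons_val_one,
      Matrix.head_cons, Matrix.empty_val', Matrix.cons_val_fin_one, Matrix.head_fin_const,
      Matrix.cons_val_two, Matrix.tail_cons, h10, h20, h21]
    linear_combination (-(1/2:ℝ)*g 1 2^3*I + (1/2:ℝ)*g 1 1*g 1 2*g 2 2*I - (1/2:ℝ)*g 0 2^2*g 1 2*I + (1/4:ℝ)*g 0 1*g 0 2*g 2 2*I + (1/4:ℝ)*g 0 1*g 0 2*g 1 1*I - (1/2:ℝ)*g 0 1^2*g 1 2*I + (1/4:ℝ)*g 0 0*g 1 2*g 2 2*I + (1/4:ℝ)*g 0 0*g 1 1*g 1 2*I + (1/4:ℝ)*g 0 0*g 0 1*g 0 2*I - (1/4:ℝ)*g 0 0^2*g 1 2*I) * hI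
  · simp only [RicciT, rho, GamU, Gam, epsU1, epsU2, Matrix.trace, Matrix.diag,
      Fin.sum_univ_three, Fin.zero_eta, Fin.mk_one, Fin.reduceFinMk, eps000, eps001, eps002, eps010, eps011, eps012, eps020, eps021, eps022, eps100, eps101, eps102, eps110, eps111, eps112, eps120, eps121, eps122, eps200, eps201, eps202, eps210, eps211, eps212, eps220, eps221, eps222,
      mul_zero, zero_mul, mul_one, one_mul, mul_neg_one, neg_mul, mul_neg, add_zero, zero_add,
      zero_sub, sub_zero, neg_neg, reduceIte, Fin.reduceEq, if_true, if_false, hinvd, Matrix.adjugate_fin_three,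
      Matrix.of_apply, Matrix.cons_val', Matrix.cons_val_zero, Matrix.cons_val_one,
      Matrix.head_cons, Matrix.empty_val', Matrix.cons_val_fin_one, Matrix.head_fin_const,
      Matrix.cons_val_two, Matrix.tail_cons, h10, h20, h21]
    linear_combination (-(1/2:ℝ)*g 0 2*g 1 2^2*I + (1/4:ℝ)*g 0 2*g 1 1*g 2 2*I - (1/4:ℝ)*g 0 2*g 1 1^2*I - (1/2:ℝ)*g 0 2^3*I + (1/4:ℝ)*g 0 1*g 1 2*g 2 2*I + (1/4:ℝ)*g 0 1*g 1 1*g 1 2*I - (1/2:ℝ)*g 0 1^2*g 0 2*I + (1/2:ℝ)*g 0 0*g 0 2*g 2 2*I + (1/4:ℝ)*g 0 0*g 0 2*g 1 1*I + (1/4:ℝ)*g 0 0*g 0 1*g 1 2*I) * hI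
  · simp only [RicciT, rho, GamU, Gam, epsU1, epsU2, Matrix.trace, Matrix.diag,
      Fin.sum_univ_three, Fin.zero_eta, Fin.mk_one, Fin.reduceFinMk, eps000, eps001, eps002, eps010, eps011, eps012, eps020, eps021, eps022, eps100, eps101, eps102, eps110, eps111, eps112, eps120, eps121, eps122, eps200, eps201, eps202, eps210, eps211, eps212, eps220, eps221, eps222,
      mul_zero, zero_mul, mul_one, one_mul, mul_neg_one, neg_mul, mul_neg, add_zero, zero_add,
      zero_sub, sub_zero, neg_neg, reduceIte, Fin.reduceEq, if_true, if_false, hinvd, Matrix.adjugate_fin_three,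
      Matrix.of_apply, Matrix.cons_val', Matrix.cons_val_zero, Matrix.cons_val_one,
      Matrix.head_cons, Matrix.empty_val', Matrix.cons_val_fin_one, Matrix.head_fin_const,
      Matrix.cons_val_two, Matrix.tail_cons, h10, h20, h21]
    linear_combination (-(1/2:ℝ)*g 1 2^3*I + (1/2:ℝ)*g 1 1*g 1 2*g 2 2*I - (1/2:ℝ)*g 0 2^2*g 1 2*I + (1/4:ℝ)*g 0 1*g 0 2*g 2 2*I + (1/4:ℝ)*g 0 1*g 0 2*g 1 1*I - (1/2:ℝ)*g 0 1^2*g 1 2*I + (1/4:ℝ)*g 0 0*g 1 2*g 2 2*I + (1/4:ℝ)*g 0 0*g 1 1*g 1 2*I + (1/4:ℝ)*g 0 0*g 0 1*g 0 2*I - (1/4:ℝ)*g 0 0^2*g 1 2*I) * hI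
  · simp only [RicciT, rho, GamU, Gam, epsU1, epsU2, Matrix.trace, Matrix.diag,
      Fin.sum_univ_three, Fin.zero_eta, Fin.mk_one, Fin.reduceFinMk, eps000, eps001, eps002, eps010, eps011, eps012, eps020, eps021, eps022, eps100, eps101, eps102, eps110, eps111, eps112, eps120, eps121, eps122, eps200, eps201, eps202, eps210, eps211, eps212, eps220, eps221, eps222,
      mul_zero, zero_mul, mul_one, one_mul, mul_neg_one, neg_mul, mul_neg, add_zero, zero_add,
      zero_sub, sub_zero, neg_neg, reduceIte, Fin.reduceEq, if_true, if_false, hinvd, Matrix.adjugate_fin_three,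
      Matrix.of_apply, Matrix.cons_val', Matrix.cons_val_zero, Matrix.cons_val_one,
      Matrix.head_cons, Matrix.empty_val', Matrix.cons_val_fin_one, Matrix.head_fin_const,
      Matrix.cons_val_two, Matrix.tail_cons, h10, h20, h21]
    linear_combination (-(1/2:ℝ) - (1/4:ℝ)*g 1 2^2*g 2 2*I + (1/4:ℝ)*g 1 1*g 2 2^2*I + (1/4:ℝ)*g 1 1*g 1 2^2*I - (1/4:ℝ)*g 1 1^2*g 2 2*I - (1/4:ℝ)*g 0 2^2*g 2 2*I + (3/4:ℝ)*g 0 2^2*g 1 1*I - g 0 1*g 0 2*g 1 2*I + (1/4:ℝ)*g 0 0*g 2 2^2*I + (3/4:ℝ)*g 0 0*g 1 2^2*I - (1/2:ℝ)*g 0 0*g 1 1*g 2 2*I + (1/4:ℝ)*g 0 0*g 0 2^2*I - (1/4:ℝ)*g 0 0^2*g 2 2*I) * hI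
end
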